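/- If a rational matrix R is the product R1·R2 of two rational matrices, then for every nonnegative integer ℓ, the determinantal denominator φ_ℓ(R) divides φ_ℓ(R1)·φ_ℓ(R2). -/

import Mathlib

open Polynomial

noncomputable section

/-- Normalization on a field: every nonzero element normalizes to `1`. -/
noncomputable def fieldNormalizationMonoid (K : Type*) [Field K] : NormalizationMonoid K := by
  classical
  exact
  { normUnit := fun a => if h : a = 0 then 1 else (Units.mk0 a h)⁻¹
    normUnit_zero := dif_pos rfl
    normUnit_one := by
      rw [dif_neg one_ne_zero]
      exact Units.ext (by simp)
    normUnit_mul_units := fun {a} u ha => by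
      rw [dif_neg (mul_ne_zero ha u.ne_zero), dif_neg ha]
      apply Units.ext
      simp only [Units.val_inv_eq_inv_val, Units.val_mk0, Units.val_mul]
      rw [mul_inv_rev] }

attribute [local instance] fieldNormalizationMonoid

noncomputable local instance (K : Type*) [Field K] : NormalizedGCDMonoid (Polynomial K) :=
  UniqueFactorizationMonoid.toNormalizedGCDMonoid _

variable {k : Type*} [Field k] [CharZero k]

/-- The ℓ-th determinantal denominator of a rational matrix: the monic least common
denominator of all minors of size at most ℓ. -/
def detDen {n p : ℕ} (R : Matrix (Fin n) (Fin p) (RatFunc k)) (ℓ : ℕ) : Polynomial k :=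
  (Finset.range (ℓ + 1)).lcm fun i =>
    (Finset.univ : Finset ((Fin i ↪ Fin n) × (Fin i ↪ Fin p))).lcm fun fg =>
      (Matrix.det fun a b => R (fg.1 a) (fg.2 b)).denom

/-!
Each minor of `R1 * R2` is `det (M * N)` for a block of rows `M` of `R1` and a block of columns
`N` of `R2`. Expanding the determinant multilinearly and averaging over the `r!` reorderings of
the columns of `M` gives the Cauchy–Binet identity in the form
`r! * det (M * N) = ∑ e : Fin r ↪ ι, det (M.submatrix id e) * det (N.submatrix e id)`,
whose terms are products of minors of `R1` and `R2` of the same size. Hence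
`φ_ℓ(R1) * φ_ℓ(R2) * r! * det (M * N)` is a polynomial, and `r!` is a unit since the
characteristic is zero.
-/

namespace Matrix

open Equiv

variable {R ι : Type*} [CommRing R] [Fintype ι] {r : ℕ}

theorem det_mul_eq_sum_det_submatrix_mul_prod (M : Matrix (Fin r) ι R) (N : Matrix ι (Fin r) R) :
    (M * N).det = ∑ q : Fin r → ι, (M.submatrix id q).det * ∏ x, N (q x) x := by
  simp only [det_apply', Matrix.mul_apply, Finset.prod_univ_sum, Finset.mul_sum, Finset.sum_mul,
    Fintype.piFinset_univ, submatrix_apply, id_eq]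
  rw [Finset.sum_comm]
  refine Fintype.sum_congr _ _ fun q => Fintype.sum_congr _ _ fun σ => ?_
  rw [Finset.prod_mul_distrib, mul_assoc]

variable [DecidableEq ι]

theorem det_mul_eq_sum_embedding (M : Matrix (Fin r) ι R) (N : Matrix ι (Fin r) R) :
    (M * N).det = ∑ e : Fin r ↪ ι, (M.submatrix id e).det * ∏ x, N (e x) x := by
  rw [det_mul_eq_sum_det_submatrix_mul_prod,
    ← Finset.sum_subset (Finset.subset_univ {q | Function.Injective q}),
    Finset.sum_subtype _ (p := Function.Injective) (by simp),
    ← (subtypeInjectiveEquivEmbedding _ _).sum_comp]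
  · rfl
  intro q _ hq
  obtain ⟨i, j, hij, hne⟩ := Function.not_injective_iff.mp (by simpa using hq)
  rw [det_zero_of_column_eq hne fun k => by simp [hij], zero_mul]

theorem factorial_mul_det_mul (M : Matrix (Fin r) ι R) (N : Matrix ι (Fin r) R) :
    (r.factorial : R) * (M * N).det =
      ∑ e : Fin r ↪ ι, (M.submatrix id e).det * (N.submatrix e id).det := by
  have hperm (τ : Perm (Fin r)) : (M * N).det =
      ∑ e : Fin r ↪ ι, τ.sign * (M.submatrix id e).det * ∏ x, N (e (τ x)) x := by
    rw [det_mul_eq_sum_embedding, ← (embeddingCongr τ.symm (Equiv.refl ι)).sum_comp]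
    refine Fintype.sum_congr _ _ fun e => ?_
    have hcomp : ⇑(τ.symm.embeddingCongr (Equiv.refl ι) e) = e ∘ τ := rfl
    rw [hcomp]
    exact congrArg (· * _) (det_permute' τ (M.submatrix id e))
  calc (r.factorial : R) * (M * N).det = ∑ τ : Perm (Fin r), (M * N).det := by
        rw [Finset.sum_const, Finset.card_univ, Fintype.card_perm, Fintype.card_fin, nsmul_eq_mul]
    _ = ∑ τ : Perm (Fin r), ∑ e : Fin r ↪ ι,
          τ.sign * (M.submatrix id e).det * ∏ x, N (e (τ x)) x := Fintype.sum_congr _ _ hperm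
    _ = _ := by
      rw [Finset.sum_comm]
      refine Fintype.sum_congr _ _ fun e => ?_
      rw [det_apply' (N.submatrix e id), Finset.mul_sum]
      refine Fintype.sum_congr _ _ fun τ => ?_
      simp only [submatrix_apply, id_eq]
      ring

end Matrix

namespace RatFunc

variable {K : Type*} [Field K]

theorem denom_dvd_iff_mul_mem_range {x : RatFunc K} {d : K[X]} :
    x.denom ∣ d ↔ x * algebraMap K[X] (RatFunc K) d ∈ (algebraMap K[X] (RatFunc K)).range := by
  rcases eq_or_ne d 0 with rfl | hd
  · simp
  rw [denom_dvd hd]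
  have hd' : algebraMap K[X] (RatFunc K) d ≠ 0 := algebraMap_ne_zero hd
  constructor
  · rintro ⟨p, rfl⟩
    exact ⟨p, (div_mul_cancel₀ _ hd').symm⟩
  · rintro ⟨p, hp⟩
    exact ⟨p, by rw [hp, mul_div_cancel_right₀ _ hd']⟩

theorem denom_det_mul_dvd [CharZero K] {ι : Type*} [Fintype ι] [DecidableEq ι] {r : ℕ}
    (M : Matrix (Fin r) ι (RatFunc K)) (N : Matrix ι (Fin r) (RatFunc K)) {d₁ d₂ : K[X]}
    (hM : ∀ e : Fin r ↪ ι, (M.submatrix id e).det.denom ∣ d₁)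
    (hN : ∀ e : Fin r ↪ ι, (N.submatrix e id).det.denom ∣ d₂) :
    (M * N).det.denom ∣ d₁ * d₂ := by
  simp only [denom_dvd_iff_mul_mem_range] at hM hN ⊢
  have hfactorial : (r.factorial : RatFunc K) * ((M * N).det * algebraMap K[X] _ (d₁ * d₂)) ∈
      (algebraMap K[X] (RatFunc K)).range := by
    rw [← mul_assoc, Matrix.factorial_mul_det_mul, Finset.sum_mul]
    refine Subring.sum_mem _ fun e _ => ?_
    convert Subring.mul_mem _ (hM e) (hN e) using 1
    rw [map_mul]
    ring
  have hinv : ((r.factorial : RatFunc K))⁻¹ ∈ (algebraMap K[X] (RatFunc K)).range :=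
    ⟨Polynomial.C (r.factorial : K)⁻¹, by simp⟩
  have hr : (r.factorial : RatFunc K) ≠ 0 := Nat.cast_ne_zero.mpr r.factorial_ne_zero
  rw [← inv_mul_cancel_left₀ hr ((M * N).det * _)]
  exact Subring.mul_mem _ hinv hfactorial

end RatFunc

theorem detDen_dvd_iff {K : Type*} [Field K] {n p : ℕ} (R : Matrix (Fin n) (Fin p) (RatFunc K))
    (ℓ : ℕ) (d : K[X]) :
    detDen R ℓ ∣ d ↔ ∀ i ≤ ℓ, ∀ (f : Fin i ↪ Fin n) (g : Fin i ↪ Fin p),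
      (R.submatrix f g).det.denom ∣ d := by
  simp only [detDen, Finset.lcm_dvd_iff, Finset.mem_range, Nat.lt_succ_iff, Finset.mem_univ,
    true_implies, Prod.forall]
  rfl

/-- If `R = R1 * R2`, then for every `ℓ`, `φ_ℓ(R) ∣ φ_ℓ(R1) * φ_ℓ(R2)`. -/
theorem detDen_mul_dvd {n m p : ℕ} (R : Matrix (Fin n) (Fin p) (RatFunc k))
    (R1 : Matrix (Fin n) (Fin m) (RatFunc k)) (R2 : Matrix (Fin m) (Fin p) (RatFunc k))
    (hR : R = R1 * R2) (ℓ : ℕ) :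
    detDen R ℓ ∣ detDen R1 ℓ * detDen R2 ℓ := by
  rw [detDen_dvd_iff]
  intro i hi f g
  rw [hR, Matrix.submatrix_mul _ _ _ id _ Function.bijective_id]
  exact RatFunc.denom_det_mul_dvd _ _
    (fun e => (detDen_dvd_iff R1 ℓ _).mp dvd_rfl i hi f e)
    (fun e => (detDen_dvd_iff R2 ℓ _).mp dvd_rfl i hi e g)
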